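/- arXiv:2404.17111 — 2 statements merged into one kernel-verified Lean document; each statement's English description precedes it below -/
import Mathlib

section
/- Let φ(z) = z/(1+z) and Z₃ = φ(z)∂_z acting on smooth functions of z ∈ (0,∞). For every k ∈ ℕ there exist smooth functions a^k_{0,φ}, …, a^k_{k,φ} and b^k_{0,φ}, …, b^k_{k,φ} of z, bounded on [0,∞), depending only on φ and k, with a^k_{k,φ} ≡ 1, such that for every smooth function f on (0,∞) and all z > 0: Z₃^k(∂_{zz} f) = Σ_{l=0}^{k} ( a^k_{l,φ}(z) ∂_{zz}(Z₃^l f) + b^k_{l,φ}(z) ∂_z(Z₃^l f) ). -/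
/-!
With `u = 1/(1+z)` we have `φ = 1 - u`, `φ' = u²` and `u' = -u²`, so `Z₃` maps polynomials in
`u` to polynomials in `u`, and all coefficients can be taken of the form `P(u)`: these are smooth
and bounded on `[0,∞)` because `u` takes values in `[0,1]` there. Differentiating `Z₃ g = φ g'`
twice gives `φ g''' = (Z₃g)'' + 2u (Z₃g)' - 2u g''`, so applying `Z₃` to `P(u) g'' + Q(u) g'`
produces the same kind of expression in `g` plus `P(u) ((Z₃g)'' + 2u (Z₃g)')`; induction on `k`
then yields the coefficients, with the leading one `1` at every step.
-/

open Set

noncomputable section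

/-- `φ(z) = z / (1 + z)`. -/
def phi (z : ℝ) : ℝ := z / (1 + z)

/-- The conormal vector field `Z₃ = φ(z) ∂_z` acting on functions of `z`. -/
def Z3op (f : ℝ → ℝ) : ℝ → ℝ := fun z => phi z * deriv f z

open Polynomial
open scoped ContDiff

namespace Z3

def invOneAdd (z : ℝ) : ℝ := (1 + z)⁻¹

lemma phi_eq_one_sub_invOneAdd {z : ℝ} (hz : 1 + z ≠ 0) : phi z = 1 - invOneAdd z := by
  rw [phi, invOneAdd]
  field_simp
  ring

lemma hasDerivAt_invOneAdd {z : ℝ} (hz : 1 + z ≠ 0) :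
    HasDerivAt invOneAdd (-invOneAdd z ^ 2) z := by
  refine (((hasDerivAt_id z).const_add 1).fun_inv hz).congr_deriv ?_
  simp [invOneAdd, neg_div]

lemma hasDerivAt_phi {z : ℝ} (hz : 1 + z ≠ 0) : HasDerivAt phi (invOneAdd z ^ 2) z := by
  refine ((hasDerivAt_id z).div ((hasDerivAt_id z).const_add 1) hz).congr_deriv ?_
  simp [invOneAdd]

/-- `Z₃ (P ∘ u) = (Z3poly P) ∘ u`, since `φ u' = (u - 1) u²`. -/
def Z3poly (P : ℝ[X]) : ℝ[X] := (X ^ 3 - X ^ 2) * derivative P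

lemma hasDerivAt_eval_invOneAdd (P : ℝ[X]) {z : ℝ} (hz : 1 + z ≠ 0) :
    HasDerivAt (fun w => P.eval (invOneAdd w))
      (-invOneAdd z ^ 2 * (derivative P).eval (invOneAdd z)) z :=
  ((P.hasDerivAt (invOneAdd z)).comp z (hasDerivAt_invOneAdd hz)).congr_deriv (mul_comm _ _)

lemma phi_mul_derivative_eval (P : ℝ[X]) {z : ℝ} (hz : 1 + z ≠ 0) :
    phi z * (-invOneAdd z ^ 2 * (derivative P).eval (invOneAdd z))
      = (Z3poly P).eval (invOneAdd z) := by
  simp only [Z3poly, eval_mul, eval_sub, eval_pow, eval_X, phi_eq_one_sub_invOneAdd hz]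
  ring

lemma contDiffOn_phi : ContDiffOn ℝ ∞ phi (Ioi 0) :=
  contDiffOn_id.div (contDiffOn_const.add contDiffOn_id) fun x (hx : 0 < x) => by positivity

section Smooth

variable {g : ℝ → ℝ}

lemma contDiffOn_deriv (hg : ContDiffOn ℝ ∞ g (Ioi 0)) : ContDiffOn ℝ ∞ (deriv g) (Ioi 0) :=
  hg.deriv_of_isOpen isOpen_Ioi (by exact_mod_cast le_top)

lemma hasDerivAt_of_contDiffOn (hg : ContDiffOn ℝ ∞ g (Ioi 0)) {z : ℝ} (hz : 0 < z) :
    HasDerivAt g (deriv g z) z :=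
  ((hg.contDiffAt (isOpen_Ioi.mem_nhds hz)).differentiableAt (by simp)).hasDerivAt

lemma contDiffOn_Z3op (hg : ContDiffOn ℝ ∞ g (Ioi 0)) : ContDiffOn ℝ ∞ (Z3op g) (Ioi 0) :=
  contDiffOn_phi.mul (contDiffOn_deriv hg)

lemma deriv_Z3op (hg : ContDiffOn ℝ ∞ g (Ioi 0)) {z : ℝ} (hz : 0 < z) :
    deriv (Z3op g) z = invOneAdd z ^ 2 * deriv g z + phi z * deriv (deriv g) z :=
  ((hasDerivAt_phi (by positivity)).mul
    (hasDerivAt_of_contDiffOn (contDiffOn_deriv hg) hz)).deriv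

lemma phi_mul_deriv_deriv_deriv (hg : ContDiffOn ℝ ∞ g (Ioi 0)) {z : ℝ} (hz : 0 < z) :
    phi z * deriv (deriv (deriv g)) z
      = deriv (deriv (Z3op g)) z + 2 * invOneAdd z * deriv (Z3op g) z
        - 2 * invOneAdd z * deriv (deriv g) z := by
  have hz1 : 1 + z ≠ 0 := by positivity
  have hg1 := contDiffOn_deriv hg
  have hu2 : HasDerivAt (fun w => invOneAdd w ^ 2) (-2 * invOneAdd z ^ 3) z := by
    refine ((hasDerivAt_invOneAdd hz1).pow 2).congr_deriv ?_
    norm_num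
    ring
  have hZ : deriv (Z3op g) =ᶠ[nhds z]
      fun w => invOneAdd w ^ 2 * deriv g w + phi w * deriv (deriv g) w := by
    filter_upwards [isOpen_Ioi.mem_nhds hz] with w hw using deriv_Z3op hg hw
  have hZ' : deriv (deriv (Z3op g)) z
      = -2 * invOneAdd z ^ 3 * deriv g z + invOneAdd z ^ 2 * deriv (deriv g) z
        + (invOneAdd z ^ 2 * deriv (deriv g) z + phi z * deriv (deriv (deriv g)) z) := by
    rw [hZ.deriv_eq]
    exact ((hu2.mul (hasDerivAt_of_contDiffOn hg1 hz)).add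
      ((hasDerivAt_phi hz1).mul (hasDerivAt_of_contDiffOn (contDiffOn_deriv hg1) hz))).deriv
  rw [hZ', deriv_Z3op hg hz, phi_eq_one_sub_invOneAdd hz1]
  ring

lemma contDiffOn_iterate_Z3op (hg : ContDiffOn ℝ ∞ g (Ioi 0)) (l : ℕ) :
    ContDiffOn ℝ ∞ (Z3op^[l] g) (Ioi 0) := by
  induction l with
  | zero => exact hg
  | succ l ih => rw [Function.iterate_succ_apply']; exact contDiffOn_Z3op ih

end Smooth

def secondOrder (c : ℝ[X] × ℝ[X]) (g : ℝ → ℝ) (z : ℝ) : ℝ :=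
  c.1.eval (invOneAdd z) * deriv (deriv g) z + c.2.eval (invOneAdd z) * deriv g z

lemma secondOrder_add (c d : ℝ[X] × ℝ[X]) (g : ℝ → ℝ) (z : ℝ) :
    secondOrder (c + d) g z = secondOrder c g z + secondOrder d g z := by
  simp only [secondOrder, Prod.fst_add, Prod.snd_add, eval_add]
  ring

def coeffStep (c : ℝ[X] × ℝ[X]) : ℝ[X] × ℝ[X] :=
  (Z3poly c.1 - 2 * X * c.1 + (1 - X) * c.2, Z3poly c.2)

def coeffShift (c : ℝ[X] × ℝ[X]) : ℝ[X] × ℝ[X] := (c.1, 2 * X * c.1)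

lemma hasDerivAt_secondOrder (c : ℝ[X] × ℝ[X]) {g : ℝ → ℝ} (hg : ContDiffOn ℝ ∞ g (Ioi 0))
    {z : ℝ} (hz : 0 < z) :
    HasDerivAt (secondOrder c g)
      (-invOneAdd z ^ 2 * c.1.derivative.eval (invOneAdd z) * deriv (deriv g) z
          + c.1.eval (invOneAdd z) * deriv (deriv (deriv g)) z
        + (-invOneAdd z ^ 2 * c.2.derivative.eval (invOneAdd z) * deriv g z
          + c.2.eval (invOneAdd z) * deriv (deriv g) z)) z :=
  have hg1 := contDiffOn_deriv hg
  ((hasDerivAt_eval_invOneAdd c.1 (by positivity)).mul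
      (hasDerivAt_of_contDiffOn (contDiffOn_deriv hg1) hz)).add
    ((hasDerivAt_eval_invOneAdd c.2 (by positivity)).mul (hasDerivAt_of_contDiffOn hg1 hz))

lemma Z3op_secondOrder (c : ℝ[X] × ℝ[X]) {g : ℝ → ℝ} (hg : ContDiffOn ℝ ∞ g (Ioi 0)) {z : ℝ}
    (hz : 0 < z) :
    Z3op (secondOrder c g) z
      = secondOrder (coeffStep c) g z + secondOrder (coeffShift c) (Z3op g) z := by
  have hz1 : 1 + z ≠ 0 := by positivity
  show phi z * deriv (secondOrder c g) z = _
  rw [(hasDerivAt_secondOrder c hg hz).deriv]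
  simp only [secondOrder, coeffStep, coeffShift, eval_add, eval_sub, eval_mul, eval_ofNat,
    eval_X, eval_one]
  linear_combination deriv (deriv g) z * phi_mul_derivative_eval c.1 hz1
    + deriv g z * phi_mul_derivative_eval c.2 hz1
    + c.1.eval (invOneAdd z) * phi_mul_deriv_deriv_deriv hg hz
    + c.2.eval (invOneAdd z) * deriv (deriv g) z * phi_eq_one_sub_invOneAdd hz1

/-- `coeffs k l` holds the coefficients `(a^k_l, b^k_l)` as polynomials in `u`. -/
def coeffs : ℕ → ℕ → ℝ[X] × ℝ[X]
  | 0, 0 => (1, 0)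
  | 0, _ + 1 => 0
  | k + 1, 0 => coeffStep (coeffs k 0)
  | k + 1, l + 1 => coeffStep (coeffs k (l + 1)) + coeffShift (coeffs k l)

lemma coeffs_of_lt {k l : ℕ} (h : k < l) : coeffs k l = 0 := by
  induction k generalizing l with
  | zero => obtain ⟨l, rfl⟩ := Nat.exists_eq_succ_of_ne_zero (by omega : l ≠ 0); rfl
  | succ k ih =>
    obtain ⟨l, rfl⟩ := Nat.exists_eq_succ_of_ne_zero (by omega : l ≠ 0)
    simp [coeffs, ih (by omega : k < l + 1), ih (by omega : k < l), coeffStep, coeffShift, Z3poly]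

lemma coeffs_self_fst (k : ℕ) : (coeffs k k).1 = 1 := by
  induction k with
  | zero => rfl
  | succ k ih =>
    simp [coeffs, coeffs_of_lt k.lt_succ_self, coeffStep, coeffShift, Z3poly, ih]

lemma sum_secondOrder_coeffs_succ (k : ℕ) (g : ℕ → ℝ → ℝ) (z : ℝ) :
    ∑ l ∈ Finset.range (k + 2), secondOrder (coeffs (k + 1) l) (g l) z
      = ∑ l ∈ Finset.range (k + 1), (secondOrder (coeffStep (coeffs k l)) (g l) z
          + secondOrder (coeffShift (coeffs k l)) (g (l + 1)) z) := by
  have hstep : ∑ l ∈ Finset.range (k + 2), secondOrder (coeffStep (coeffs k l)) (g l) z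
      = ∑ l ∈ Finset.range (k + 1), secondOrder (coeffStep (coeffs k l)) (g l) z := by
    rw [Finset.sum_range_succ, coeffs_of_lt k.lt_succ_self]
    simp [coeffStep, Z3poly, secondOrder]
  rw [Finset.sum_add_distrib, ← hstep, Finset.sum_range_succ', Finset.sum_range_succ' _ (k + 1)]
  simp only [coeffs, secondOrder_add, Finset.sum_add_distrib]
  ring

lemma iterate_Z3op_deriv_deriv {f : ℝ → ℝ} (hf : ContDiffOn ℝ ∞ f (Ioi 0)) (k : ℕ) {z : ℝ}
    (hz : 0 < z) :
    Z3op^[k] (deriv (deriv f)) z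
      = ∑ l ∈ Finset.range (k + 1), secondOrder (coeffs k l) (Z3op^[l] f) z := by
  induction k generalizing z with
  | zero => simp [coeffs, secondOrder]
  | succ k ih =>
    have hsmooth := contDiffOn_iterate_Z3op hf
    have hev : Z3op^[k] (deriv (deriv f))
        =ᶠ[nhds z] fun w =>
          ∑ l ∈ Finset.range (k + 1), secondOrder (coeffs k l) (Z3op^[l] f) w := by
      filter_upwards [isOpen_Ioi.mem_nhds hz] with w hw using ih hw
    calc Z3op^[k + 1] (deriv (deriv f)) z
        = phi z * deriv (fun w => ∑ l ∈ Finset.range (k + 1),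
            secondOrder (coeffs k l) (Z3op^[l] f) w) z := by
          rw [Function.iterate_succ_apply', ← hev.deriv_eq]; rfl
      _ = ∑ l ∈ Finset.range (k + 1), Z3op (secondOrder (coeffs k l) (Z3op^[l] f)) z := by
          rw [deriv_fun_sum fun l _ => (hasDerivAt_secondOrder _ (hsmooth l) hz).differentiableAt,
            Finset.mul_sum]
          rfl
      _ = _ := by
          simp only [Z3op_secondOrder _ (hsmooth _) hz, sum_secondOrder_coeffs_succ,
            Function.iterate_succ_apply']

lemma contDiffOn_eval_invOneAdd (P : ℝ[X]) :
    ContDiffOn ℝ ∞ (fun z => P.eval (invOneAdd z)) (Ici 0) :=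
  (P.contDiff_aeval ∞).comp_contDiffOn <| (contDiffOn_const.add contDiffOn_id).inv
    fun x (hx : 0 ≤ x) => by positivity

lemma exists_bound_eval_invOneAdd (P : ℝ[X]) :
    ∃ B : ℝ, ∀ z ∈ Ici (0 : ℝ), |P.eval (invOneAdd z)| ≤ B := by
  obtain ⟨B, hB⟩ := (isCompact_Icc (a := (0 : ℝ)) (b := 1)).exists_bound_of_continuousOn
    P.continuous.continuousOn
  exact ⟨B, fun z (hz : 0 ≤ z) =>
    hB _ ⟨inv_nonneg.2 (by linarith), inv_le_one_of_one_le₀ (by linarith)⟩⟩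

end Z3

open Z3 in
/-- **Lemma 2.5(iii).** For every `k` there are smooth functions `a^k_{l,φ}`, `b^k_{l,φ}`,
bounded on `[0,∞)`, with `a^k_{k,φ} = 1`, such that for every smooth `f` on `(0,∞)` and
`z > 0`, `Z₃^k ∂_{zz} f = Σ_{l=0}^{k} (a^k_{l,φ} ∂_{zz} Z₃^l f + b^k_{l,φ} ∂_z Z₃^l f)`. -/
theorem Z3_commutator_second_deriv (k : ℕ) :
    ∃ a b : ℕ → ℝ → ℝ,
      (∀ j ≤ k,
        (ContDiffOn ℝ (⊤ : ℕ∞) (a j) (Ici (0:ℝ)) ∧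
          ∃ B : ℝ, ∀ z ∈ Ici (0:ℝ), |a j z| ≤ B) ∧
        (ContDiffOn ℝ (⊤ : ℕ∞) (b j) (Ici (0:ℝ)) ∧
          ∃ B : ℝ, ∀ z ∈ Ici (0:ℝ), |b j z| ≤ B)) ∧
      (∀ z : ℝ, a k z = 1) ∧
      (∀ f : ℝ → ℝ, ContDiffOn ℝ (⊤ : ℕ∞) f (Ioi (0:ℝ)) → ∀ z > (0:ℝ),
        Z3op^[k] (deriv (deriv f)) z
          = ∑ l ∈ Finset.range (k + 1),
              (a l z * deriv (deriv (Z3op^[l] f)) z + b l z * deriv (Z3op^[l] f) z)) := by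
  refine ⟨fun j z => (coeffs k j).1.eval (invOneAdd z),
    fun j z => (coeffs k j).2.eval (invOneAdd z),
    fun j _ => ⟨⟨contDiffOn_eval_invOneAdd _, exists_bound_eval_invOneAdd _⟩,
      ⟨contDiffOn_eval_invOneAdd _, exists_bound_eval_invOneAdd _⟩⟩,
    fun z => by simp [coeffs_self_fst], fun f hf z hz => iterate_Z3op_deriv_deriv hf k hz⟩
end
end

section
/- Let φ(z) = z/(1+z) and Z₃ = φ(z)∂_z acting on smooth functions of z ∈ (0,∞). For every k ∈ ℕ there exist smooth functions ã^k_{0,φ}, …, ã^k_{k,φ} and b̃^k_{0,φ}, …, b̃^k_{k,φ} of z, bounded on [0,∞), depending only on φ and k, with ã^k_{k,φ} ≡ 1, such that for every smooth function f on (0,∞) and all z > 0: ∂_{zz}(Z₃^k f) = Σ_{l=0}^{k} ã^k_{l,φ}(z) Z₃^l(∂_{zz} f) + Σ_{j=0}^{k} b̃^k_{j,φ}(z) Z₃^j(∂_z f). -/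
open Set

noncomputable section

/-!
All coefficients that occur are polynomials in `t = (1 + z)⁻¹`: `φ = 1 - t`, and `∂_z` acts on
them as `-t² ∂_t`. Since `t ∈ (0, 1]` for `z ≥ 0`, such coefficients are smooth and bounded on
`[0, ∞)`. The commutator `∂_z Z₃ = Z₃ ∂_z + φ' ∂_z`, differentiated once more, gives
`∂_z² Z₃ = Z₃ ∂_z² + 2φ' ∂_z² + φ'' ∂_z`, and `Z₃ (p Z₃ʲ h) = (φ ∂_z p) Z₃ʲ h + p Z₃ʲ⁺¹ h`
keeps combinations `∑ⱼ pⱼ Z₃ʲ h` closed under `Z₃`. Induction on `k` then writes `∂_z Z₃ᵏ f` as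
such a combination of the `Z₃ʲ ∂_z f`, and `∂_z² Z₃ᵏ f - Z₃ᵏ ∂_z² f` as one of the `Z₃ˡ ∂_z² f`
(`l < k`) plus one of the `Z₃ʲ ∂_z f` (`j ≤ k`), with coefficients depending only on `k`.
-/

open Polynomial
open scoped ContDiff

def evalInvOneAdd (p : ℝ[X]) (z : ℝ) : ℝ := p.eval (1 + z)⁻¹

@[simp]
lemma evalInvOneAdd_add (p q : ℝ[X]) (z : ℝ) :
    evalInvOneAdd (p + q) z = evalInvOneAdd p z + evalInvOneAdd q z :=
  eval_add

@[simp]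
lemma evalInvOneAdd_mul (p q : ℝ[X]) (z : ℝ) :
    evalInvOneAdd (p * q) z = evalInvOneAdd p z * evalInvOneAdd q z :=
  eval_mul

@[simp]
lemma evalInvOneAdd_zero (z : ℝ) : evalInvOneAdd 0 z = 0 :=
  eval_zero

@[simp]
lemma evalInvOneAdd_one (z : ℝ) : evalInvOneAdd 1 z = 1 :=
  eval_one

lemma contDiffOn_evalInvOneAdd (p : ℝ[X]) : ContDiffOn ℝ ∞ (evalInvOneAdd p) (Ici 0) := by
  have hinv : ContDiffOn ℝ ∞ (fun z : ℝ => (1 + z)⁻¹) (Ici 0) :=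
    (contDiffOn_const.add contDiffOn_id).inv fun z (hz : 0 ≤ z) => by positivity
  exact (p.contDiff_aeval ∞).comp_contDiffOn hinv

lemma exists_bound_evalInvOneAdd (p : ℝ[X]) : ∃ B, ∀ z ∈ Ici (0 : ℝ), |evalInvOneAdd p z| ≤ B := by
  obtain ⟨B, hB⟩ := isCompact_Icc.exists_bound_of_continuousOn
    (p.continuous (R := ℝ)).continuousOn (s := Icc 0 1)
  refine ⟨B, fun z (hz : 0 ≤ z) => hB _ ⟨by positivity, inv_le_one_of_one_le₀ (by linarith)⟩⟩

lemma hasDerivAt_evalInvOneAdd (p : ℝ[X]) {z : ℝ} (hz : 1 + z ≠ 0) :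
    HasDerivAt (evalInvOneAdd p) (evalInvOneAdd (-X ^ 2 * derivative p) z) z := by
  have hinv : HasDerivAt (fun w : ℝ => (1 + w)⁻¹) (-1 / (1 + z) ^ 2) z := by
    simpa using ((hasDerivAt_id z).const_add 1).fun_inv hz
  refine ((p.hasDerivAt _).comp z hinv).congr_deriv ?_
  simp only [evalInvOneAdd, eval_mul, eval_neg, eval_pow, eval_X]
  rw [inv_pow]; ring

lemma phi_eqOn : EqOn phi (evalInvOneAdd (1 - X)) (Ioi 0) := fun z (hz : 0 < z) => by
  simp only [phi, evalInvOneAdd, eval_sub, eval_one, eval_X]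
  field_simp
  ring

lemma hasDerivAt_phi {z : ℝ} (hz : 0 < z) : HasDerivAt phi (evalInvOneAdd (X ^ 2) z) z := by
  have h := (hasDerivAt_evalInvOneAdd (1 - X) (z := z) (by positivity)).congr_of_eventuallyEq
    (phi_eqOn.eventuallyEq_of_mem (isOpen_Ioi.mem_nhds hz))
  simpa using h

lemma contDiffOn_phi : ContDiffOn ℝ ∞ phi (Ioi 0) :=
  ((contDiffOn_evalInvOneAdd _).mono Ioi_subset_Ici_self).congr phi_eqOn

lemma ContDiffOn.deriv_Ioi {f : ℝ → ℝ} (hf : ContDiffOn ℝ ∞ f (Ioi 0)) :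
    ContDiffOn ℝ ∞ (deriv f) (Ioi 0) :=
  ((contDiffOn_infty_iff_deriv_of_isOpen isOpen_Ioi).1 hf).2

lemma ContDiffOn.differentiableAt_Ioi {f : ℝ → ℝ} (hf : ContDiffOn ℝ ∞ f (Ioi 0)) {z : ℝ}
    (hz : 0 < z) : DifferentiableAt ℝ f z :=
  (hf.differentiableOn (by simp)).differentiableAt (Ioi_mem_nhds hz)

lemma Set.EqOn.Z3op {f g : ℝ → ℝ} {s : Set ℝ} (hfg : EqOn f g s) (hs : IsOpen s) :
    EqOn (Z3op f) (Z3op g) s := fun z hz => by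
  simp only [_root_.Z3op, hfg.deriv hs hz]

lemma contDiffOn_Z3op {f : ℝ → ℝ} (hf : ContDiffOn ℝ ∞ f (Ioi 0)) :
    ContDiffOn ℝ ∞ (Z3op f) (Ioi 0) :=
  contDiffOn_phi.mul hf.deriv_Ioi

lemma contDiffOn_Z3op_iterate {f : ℝ → ℝ} (hf : ContDiffOn ℝ ∞ f (Ioi 0)) (k : ℕ) :
    ContDiffOn ℝ ∞ (Z3op^[k] f) (Ioi 0) := by
  induction k with
  | zero => exact hf
  | succ k ih => rw [Function.iterate_succ_apply']; exact contDiffOn_Z3op ih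

lemma Z3op_add {F G : ℝ → ℝ} {z : ℝ} (hF : DifferentiableAt ℝ F z)
    (hG : DifferentiableAt ℝ G z) :
    Z3op (fun w => F w + G w) z = Z3op F z + Z3op G z := by
  rw [Z3op, Z3op, Z3op, deriv_fun_add hF hG, mul_add]

lemma Z3op_sum {ι : Type*} (s : Finset ι) {F : ι → ℝ → ℝ} {z : ℝ}
    (hF : ∀ i ∈ s, DifferentiableAt ℝ (F i) z) :
    Z3op (fun w => ∑ i ∈ s, F i w) z = ∑ i ∈ s, Z3op (F i) z := by
  simp only [Z3op, deriv_fun_sum hF, Finset.mul_sum]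

lemma Z3op_evalInvOneAdd_mul (p : ℝ[X]) {G : ℝ → ℝ} {z : ℝ} (hz : 0 < z)
    (hG : DifferentiableAt ℝ G z) :
    Z3op (fun w => evalInvOneAdd p w * G w) z =
      evalInvOneAdd ((1 - X) * (-X ^ 2 * derivative p)) z * G z
        + evalInvOneAdd p z * Z3op G z := by
  have hp := hasDerivAt_evalInvOneAdd p (z := z) (by positivity)
  simp only [Z3op, deriv_fun_mul hp.differentiableAt hG, hp.deriv, phi_eqOn hz, evalInvOneAdd_mul]
  ring

lemma deriv_Z3op_eqOn {g : ℝ → ℝ} (hg : ContDiffOn ℝ ∞ g (Ioi 0)) :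
    EqOn (deriv (Z3op g))
      (fun z => Z3op (deriv g) z + evalInvOneAdd (X ^ 2) z * deriv g z) (Ioi 0) := by
  intro z (hz : 0 < z)
  unfold Z3op
  rw [deriv_fun_mul (hasDerivAt_phi hz).differentiableAt (hg.deriv_Ioi.differentiableAt_Ioi hz),
    (hasDerivAt_phi hz).deriv]
  ring

lemma deriv_deriv_Z3op_eqOn {g : ℝ → ℝ} (hg : ContDiffOn ℝ ∞ g (Ioi 0)) :
    EqOn (deriv (deriv (Z3op g)))
      (fun z => Z3op (deriv (deriv g)) z + evalInvOneAdd (2 * X ^ 2) z * deriv (deriv g) z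
        + evalInvOneAdd (-2 * X ^ 3) z * deriv g z) (Ioi 0) := by
  intro z (hz : 0 < z)
  have hg' := hg.deriv_Ioi
  have hψ := hasDerivAt_evalInvOneAdd (X ^ 2) (z := z) (by positivity)
  rw [(deriv_Z3op_eqOn hg).deriv isOpen_Ioi hz,
    deriv_fun_add ((contDiffOn_Z3op hg').differentiableAt_Ioi hz)
      (hψ.differentiableAt.fun_mul (hg'.differentiableAt_Ioi hz)),
    deriv_Z3op_eqOn hg' hz, deriv_fun_mul hψ.differentiableAt (hg'.differentiableAt_Ioi hz),
    hψ.deriv]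
  simp only [evalInvOneAdd, eval_mul, eval_neg, eval_pow, eval_X, eval_ofNat, eval_C,
    derivative_X_pow]
  ring

def z3Sum (c : ℕ → ℝ[X]) (n : ℕ) (h : ℝ → ℝ) (z : ℝ) : ℝ :=
  ∑ j ∈ Finset.range n, evalInvOneAdd (c j) z * Z3op^[j] h z

lemma contDiffOn_z3Sum (c : ℕ → ℝ[X]) (n : ℕ) {h : ℝ → ℝ} (hh : ContDiffOn ℝ ∞ h (Ioi 0)) :
    ContDiffOn ℝ ∞ (z3Sum c n h) (Ioi 0) :=
  ContDiffOn.sum fun j _ => ((contDiffOn_evalInvOneAdd (c j)).mono Ioi_subset_Ici_self).mul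
    (contDiffOn_Z3op_iterate hh j)

lemma z3Sum_update_one_succ (c : ℕ → ℝ[X]) (n : ℕ) (h : ℝ → ℝ) (z : ℝ) :
    z3Sum (Function.update c n 1) (n + 1) h z = z3Sum c n h z + Z3op^[n] h z := by
  rw [z3Sum, Finset.sum_range_succ, Function.update_self, evalInvOneAdd_one, one_mul]
  congr 1
  exact Finset.sum_congr rfl fun j hj =>
    by rw [Function.update_of_ne (Finset.mem_range.1 hj).ne]

-- The coefficients are chosen before `h`: this uniformity is what makes the final ones
-- depend on `k` alone.
def IsZ3Operator (n : ℕ) (T : (ℝ → ℝ) → ℝ → ℝ) : Prop :=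
  ∃ c : ℕ → ℝ[X], ∀ h, ContDiffOn ℝ ∞ h (Ioi 0) → EqOn (T h) (z3Sum c n h) (Ioi 0)

lemma isZ3Operator_z3Sum (c : ℕ → ℝ[X]) (n : ℕ) : IsZ3Operator n (z3Sum c n) :=
  ⟨c, fun _ _ => eqOn_refl _ _⟩

lemma isZ3Operator_iterate (j : ℕ) : IsZ3Operator (j + 1) (fun h => Z3op^[j] h) :=
  ⟨fun i => if i = j then 1 else 0, fun h _ z _ => by
    simp [z3Sum, apply_ite (evalInvOneAdd · z), Finset.sum_ite_eq']⟩

namespace IsZ3Operator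

variable {n m : ℕ} {T U : (ℝ → ℝ) → ℝ → ℝ}

lemma congr (hT : IsZ3Operator n T)
    (hUT : ∀ h, ContDiffOn ℝ ∞ h (Ioi 0) → EqOn (U h) (T h) (Ioi 0)) : IsZ3Operator n U :=
  let ⟨c, hc⟩ := hT
  ⟨c, fun h hh => (hUT h hh).trans (hc h hh)⟩

lemma mono (hT : IsZ3Operator n T) (hnm : n ≤ m) : IsZ3Operator m T := by
  obtain ⟨c, hc⟩ := hT
  refine ⟨fun j => if j < n then c j else 0, fun h hh => (hc h hh).trans fun z _ => ?_⟩
  simp only [z3Sum]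
  rw [← Finset.sum_range_add_sum_Ico _ hnm, Finset.sum_eq_zero (s := Finset.Ico n m), add_zero]
  · exact Finset.sum_congr rfl fun j hj => by simp [Finset.mem_range.1 hj]
  · intro j hj
    simp [not_lt.2 (Finset.mem_Ico.1 hj).1]

lemma add (hT : IsZ3Operator n T) (hU : IsZ3Operator n U) :
    IsZ3Operator n (fun h z => T h z + U h z) := by
  obtain ⟨c, hc⟩ := hT
  obtain ⟨d, hd⟩ := hU
  refine ⟨c + d, fun h hh z hz => ?_⟩
  simp [hc h hh hz, hd h hh hz, z3Sum, add_mul, Finset.sum_add_distrib]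

lemma evalInvOneAdd_mul (p : ℝ[X]) (hT : IsZ3Operator n T) :
    IsZ3Operator n (fun h z => evalInvOneAdd p z * T h z) := by
  obtain ⟨c, hc⟩ := hT
  refine ⟨fun j => p * c j, fun h hh z hz => ?_⟩
  simp [hc h hh hz, z3Sum, Finset.mul_sum, mul_assoc]

lemma zero : IsZ3Operator n (fun _ _ => 0) :=
  ⟨0, fun _ _ _ _ => by simp [z3Sum]⟩

lemma sum {ι : Type*} (s : Finset ι) {T : ι → (ℝ → ℝ) → ℝ → ℝ}
    (hT : ∀ i ∈ s, IsZ3Operator n (T i)) : IsZ3Operator n (fun h z => ∑ i ∈ s, T i h z) := by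
  classical
  induction s using Finset.induction_on with
  | empty => simpa using zero
  | insert i s hi ih =>
    simp only [Finset.sum_insert hi]
    exact (hT i (by simp)).add (ih fun j hj => hT j (by simp [hj]))

lemma Z3op_comp (hT : IsZ3Operator n T) : IsZ3Operator (n + 1) (fun h => Z3op (T h)) := by
  obtain ⟨c, hc⟩ := hT
  have hsum : IsZ3Operator (n + 1) fun h z => ∑ j ∈ Finset.range n,
      (evalInvOneAdd ((1 - X) * (-X ^ 2 * derivative (c j))) z * Z3op^[j] h z
        + evalInvOneAdd (c j) z * Z3op^[j + 1] h z) :=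
    sum _ fun j hj => ((((isZ3Operator_iterate j).evalInvOneAdd_mul _).mono (by omega)).add
      ((isZ3Operator_iterate (j + 1)).evalInvOneAdd_mul _)).mono
        (by simp only [Finset.mem_range] at hj; omega)
  refine hsum.congr fun h hh z (hz : 0 < z) => ?_
  have hdiff : ∀ j ∈ Finset.range n,
      DifferentiableAt ℝ (fun w => evalInvOneAdd (c j) w * Z3op^[j] h w) z := fun j _ =>
    (hasDerivAt_evalInvOneAdd (c j) (z := z) (by positivity)).differentiableAt.fun_mul
      ((contDiffOn_Z3op_iterate hh j).differentiableAt_Ioi hz)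
  rw [(hc h hh).Z3op isOpen_Ioi hz]
  unfold z3Sum
  rw [Z3op_sum _ hdiff]
  refine Finset.sum_congr rfl fun j _ => ?_
  rw [Z3op_evalInvOneAdd_mul _ hz ((contDiffOn_Z3op_iterate hh j).differentiableAt_Ioi hz),
    Function.iterate_succ_apply']

end IsZ3Operator

theorem exists_deriv_Z3op_iterate_eqOn (k : ℕ) : ∃ c : ℕ → ℝ[X],
    ∀ f, ContDiffOn ℝ ∞ f (Ioi 0) →
      EqOn (deriv (Z3op^[k] f)) (z3Sum c (k + 1) (deriv f)) (Ioi 0) := by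
  induction k with
  | zero => exact (isZ3Operator_iterate 0).imp fun c hc f hf => by simpa using hc _ hf.deriv_Ioi
  | succ k ih =>
    obtain ⟨c, hc⟩ := ih
    obtain ⟨c', hc'⟩ := (((isZ3Operator_z3Sum c (k + 1)).Z3op_comp).add
      (((isZ3Operator_z3Sum c (k + 1)).evalInvOneAdd_mul (X ^ 2)).mono (by omega)))
    refine ⟨c', fun f hf z hz => ?_⟩
    have hg := contDiffOn_Z3op_iterate hf k
    rw [Function.iterate_succ_apply', deriv_Z3op_eqOn hg hz]
    dsimp only
    rw [(hc f hf).Z3op isOpen_Ioi hz, hc f hf hz]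
    exact hc' _ hf.deriv_Ioi hz

theorem exists_deriv_deriv_Z3op_iterate_eqOn (k : ℕ) : ∃ c d : ℕ → ℝ[X],
    ∀ f, ContDiffOn ℝ ∞ f (Ioi 0) →
      EqOn (deriv (deriv (Z3op^[k] f)))
        (fun z => Z3op^[k] (deriv (deriv f)) z + z3Sum c k (deriv (deriv f)) z
          + z3Sum d (k + 1) (deriv f) z) (Ioi 0) := by
  induction k with
  | zero => exact ⟨0, 0, fun f _ z _ => by simp [z3Sum]⟩
  | succ k ih =>
    obtain ⟨c, d, hcd⟩ := ih
    obtain ⟨e, he⟩ := exists_deriv_Z3op_iterate_eqOn k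
    obtain ⟨c', hc'⟩ := ((isZ3Operator_z3Sum c k).Z3op_comp.add
      (((isZ3Operator_iterate k).evalInvOneAdd_mul (2 * X ^ 2)).add
        (((isZ3Operator_z3Sum c k).evalInvOneAdd_mul (2 * X ^ 2)).mono (by omega))))
    obtain ⟨d', hd'⟩ := ((isZ3Operator_z3Sum d (k + 1)).Z3op_comp.add
      ((((isZ3Operator_z3Sum d (k + 1)).evalInvOneAdd_mul (2 * X ^ 2)).add
        ((isZ3Operator_z3Sum e (k + 1)).evalInvOneAdd_mul (-2 * X ^ 3))).mono (by omega)))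
    refine ⟨c', d', fun f hf z (hz : 0 < z) => ?_⟩
    have hu := hf.deriv_Ioi.deriv_Ioi
    have hv := hf.deriv_Ioi
    rw [Function.iterate_succ_apply', deriv_deriv_Z3op_eqOn (contDiffOn_Z3op_iterate hf k) hz]
    dsimp only
    rw [(hcd f hf).Z3op isOpen_Ioi hz, hcd f hf hz, he f hf hz,
      Z3op_add
        (((contDiffOn_Z3op_iterate hu k).add (contDiffOn_z3Sum c k hu)).differentiableAt_Ioi hz)
        ((contDiffOn_z3Sum d (k + 1) hv).differentiableAt_Ioi hz),
      Z3op_add ((contDiffOn_Z3op_iterate hu k).differentiableAt_Ioi hz)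
        ((contDiffOn_z3Sum c k hu).differentiableAt_Ioi hz),
      ← hc' _ hu hz, ← hd' _ hv hz, Function.iterate_succ_apply']
    dsimp only
    ring

/-- **Lemma 2.5(iv).** For every `k` there are smooth functions `ã^k_{l,φ}`, `b̃^k_{j,φ}`,
bounded on `[0,∞)`, with `ã^k_{k,φ} = 1`, such that for every smooth `f` on `(0,∞)` and
`z > 0`, `∂_{zz} Z₃^k f = Σ_{l=0}^{k} ã^k_{l,φ} Z₃^l ∂_{zz} f + Σ_{j=0}^{k} b̃^k_{j,φ} Z₃^j ∂_z f`. -/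
theorem second_deriv_commutator_Z3 (k : ℕ) :
    ∃ a b : ℕ → ℝ → ℝ,
      (∀ j ≤ k,
        (ContDiffOn ℝ (⊤ : ℕ∞) (a j) (Ici (0:ℝ)) ∧
          ∃ B : ℝ, ∀ z ∈ Ici (0:ℝ), |a j z| ≤ B) ∧
        (ContDiffOn ℝ (⊤ : ℕ∞) (b j) (Ici (0:ℝ)) ∧
          ∃ B : ℝ, ∀ z ∈ Ici (0:ℝ), |b j z| ≤ B)) ∧
      (∀ z : ℝ, a k z = 1) ∧
      (∀ f : ℝ → ℝ, ContDiffOn ℝ (⊤ : ℕ∞) f (Ioi (0:ℝ)) → ∀ z > (0:ℝ),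
        deriv (deriv (Z3op^[k] f)) z
          = ∑ l ∈ Finset.range (k + 1), a l z * Z3op^[l] (deriv (deriv f)) z
            + ∑ j ∈ Finset.range (k + 1), b j z * Z3op^[j] (deriv f) z) := by
  obtain ⟨c, d, hcd⟩ := exists_deriv_deriv_Z3op_iterate_eqOn k
  refine ⟨fun l => evalInvOneAdd (Function.update c k 1 l), fun j => evalInvOneAdd (d j),
    fun j _ => ⟨⟨contDiffOn_evalInvOneAdd _, exists_bound_evalInvOneAdd _⟩,
      ⟨contDiffOn_evalInvOneAdd _, exists_bound_evalInvOneAdd _⟩⟩,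
    fun z => by simp, fun f hf z hz => ?_⟩
  change _ = z3Sum (Function.update c k 1) (k + 1) (deriv (deriv f)) z
    + z3Sum d (k + 1) (deriv f) z
  rw [hcd f hf hz, z3Sum_update_one_succ]
  ring
end
end
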